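/- arXiv:math/0608725 — 3 statements merged into one kernel-verified Lean document; each statement's English description precedes it below -/
import Mathlib

section
/- Let K be a non-archimedean valued field as above and let u : K → K^b be the polynomial function u(x) = Σ_{n=0}^m a_n x^n with coefficients a_n ∈ K^b. Then for each q ≥ 0 and all x, v_1,…,v_q, t_1,…,t_q ∈ K with |x| ≤ 1, |v_i| ≤ 1 and |t_i| ≤ 1 for all i, one has |Φ̄^q u(x; v_1,…,v_q; t_1,…,t_q)| ≤ max_{0 ≤ n ≤ m} |a_n|. -/
open Filter Topology

/-- The iterated partial difference quotient
`Φ^n f(x; v₁,…,vₙ; t₁,…,tₙ)`, defined by `Φ⁰ f = f` and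
`Φ^{n+1} f(x;v;t) = (Φ^n f(x + t_{n+1}•v_{n+1}; v₁,…,vₙ; t₁,…,tₙ) - Φ^n f(x; v₁,…,vₙ; t₁,…,tₙ))/t_{n+1}`,
with junk value `0` whenever some `tᵢ = 0`. -/
noncomputable def phiQuot {K X Y : Type*} [Field K] [AddCommGroup X] [Module K X]
    [AddCommGroup Y] [Module K Y] (f : X → Y) :
    (n : ℕ) → X → (Fin n → X) → (Fin n → K) → Y
  | 0 => fun x _ _ => f x
  | n + 1 => fun x v t =>
      (t (Fin.last n))⁻¹ •
        (phiQuot f n (x + t (Fin.last n) • v (Fin.last n)) (Fin.init v) (Fin.init t) -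
          phiQuot f n x (Fin.init v) (Fin.init t))

/-- The domain `U^{(n)} = {(x;v₁,…,vₙ;t₁,…,tₙ) : x ∈ U, x+v₁t₁ ∈ U, …, x+v₁t₁+⋯+vₙtₙ ∈ U}`. -/
def phiDom (K : Type*) {X : Type*} [Field K] [AddCommGroup X] [Module K X]
    (U : Set X) (n : ℕ) : Set (X × (Fin n → X) × (Fin n → K)) :=
  {p | ∀ k : ℕ, k ≤ n →
    p.1 + ∑ i ∈ Finset.univ.filter (fun i : Fin n => (i : ℕ) < k), p.2.2 i • p.2.1 i ∈ U}

/-- `f` is of class `C^n` on `U`: `f` is continuous on `U` and for every `k ≤ n` the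
partial difference quotient `Φ^k f` (defined for nonzero `tᵢ`) admits a continuous
extension to all of `U^{(k)}`. -/
def IsCn (K : Type*) {X Y : Type*} [Field K] [TopologicalSpace K] [AddCommGroup X]
    [Module K X] [TopologicalSpace X] [AddCommGroup Y] [Module K Y] [TopologicalSpace Y]
    (U : Set X) (f : X → Y) (n : ℕ) : Prop :=
  ContinuousOn f U ∧
    ∀ k : ℕ, k ≤ n →
      ∃ g : X × (Fin k → X) × (Fin k → K) → Y,
        ContinuousOn g (phiDom K U k) ∧
          ∀ p ∈ phiDom K U k, (∀ i, p.2.2 i ≠ 0) → g p = phiQuot f k p.1 p.2.1 p.2.2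

/-!
On the closed unit ball of an ultrametric field, the binomial theorem turns the difference
quotient of `x ↦ xⁿ • c` (with `‖v‖, ‖t‖ ≤ 1`, `t ≠ 0`) into
`∑_{k<n} C(n,k) t^(n-1-k) v^(n-k) • xᵏ • c`, whose coefficients again have norm at most `‖c‖`
because `‖C(n,k)‖ ≤ 1`. By the ultrametric inequality, sums of monomials with coefficients of
norm `≤ M` are bounded by `M` on the unit ball, so `‖Φ^q u‖ ≤ max ‖aₙ‖` wherever all `tᵢ ≠ 0`.
Continuity extends the bound to `Φ̄^q u`: nonzero elements are dense in the closed unit ball,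
which is open in an ultrametric field.
-/

theorem add_mul_pow_sub_pow {R : Type*} [CommRing R] (x t v : R) (n : ℕ) :
    (x + t * v) ^ n - x ^ n =
      t * ∑ k ∈ Finset.range n, (n.choose k : R) * t ^ (n - 1 - k) * v ^ (n - k) * x ^ k := by
  rw [add_pow, Finset.sum_range_succ, Nat.sub_self, pow_zero, mul_one, Nat.choose_self,
    Nat.cast_one, mul_one, add_sub_cancel_right, Finset.mul_sum]
  refine Finset.sum_congr rfl fun k hk => ?_
  rw [show n - k = n - 1 - k + 1 by simp only [Finset.mem_range] at hk; omega]
  ring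

section DiffQuot

variable {K E : Type*} [Field K] [AddCommGroup E] [Module K E]

def diffQuot (v t : K) : (K → E) →+ (K → E) where
  toFun f x := t⁻¹ • (f (x + t • v) - f x)
  map_zero' := by ext; simp
  map_add' f g := by ext; simp only [Pi.add_apply, smul_sub, smul_add]; abel

theorem diffQuot_monomial {t : K} (ht : t ≠ 0) (v : K) (n : ℕ) (c : E) :
    diffQuot v t (fun x => x ^ n • c) = ∑ k ∈ Finset.range n,
      fun x => x ^ k • (((n.choose k : K) * t ^ (n - 1 - k) * v ^ (n - k)) • c) := by
  ext x
  simp only [diffQuot, AddMonoidHom.coe_mk, ZeroHom.coe_mk, Finset.sum_apply, smul_eq_mul,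
    smul_smul, ← sub_smul, add_mul_pow_sub_pow, ← mul_assoc, inv_mul_cancel₀ ht, one_mul,
    Finset.sum_smul]
  exact Finset.sum_congr rfl fun k _ => by ring_nf

end DiffQuot

section CoeffBounded

variable {K E : Type*} [NormedField K] [NormedAddCommGroup E] [NormedSpace K E]

def coeffBoundedPolyFun (M : ℝ) : AddSubmonoid (K → E) :=
  AddSubmonoid.closure {f | ∃ (n : ℕ) (c : E), ‖c‖ ≤ M ∧ f = fun x => x ^ n • c}

theorem norm_le_of_mem_coeffBoundedPolyFun [IsUltrametricDist E] {M : ℝ} (hM : 0 ≤ M)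
    {f : K → E} (hf : f ∈ coeffBoundedPolyFun M) {x : K} (hx : ‖x‖ ≤ 1) : ‖f x‖ ≤ M := by
  induction hf using AddSubmonoid.closure_induction with
  | mem f hf =>
    obtain ⟨n, c, hc, rfl⟩ := hf
    calc ‖x ^ n • c‖ = ‖x‖ ^ n * ‖c‖ := by rw [norm_smul, norm_pow]
      _ ≤ 1 * M := by gcongr; exact pow_le_one₀ (norm_nonneg x) hx
      _ = M := one_mul M
  | zero => simpa using hM
  | add f g _ _ hf hg => exact (IsUltrametricDist.norm_add_le_max _ _).trans (max_le hf hg)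

theorem diffQuot_mem_coeffBoundedPolyFun [IsUltrametricDist K] {M : ℝ} {v t : K}
    (hv : ‖v‖ ≤ 1) (ht : t ≠ 0) (ht1 : ‖t‖ ≤ 1) {f : K → E} (hf : f ∈ coeffBoundedPolyFun M) :
    diffQuot v t f ∈ coeffBoundedPolyFun M := by
  induction hf using AddSubmonoid.closure_induction with
  | mem f hf =>
    obtain ⟨n, c, hc, rfl⟩ := hf
    rw [diffQuot_monomial ht]
    refine sum_mem fun k _ => AddSubmonoid.subset_closure ⟨k, _, ?_, rfl⟩
    have hcoeff : ‖(n.choose k : K) * t ^ (n - 1 - k) * v ^ (n - k)‖ ≤ 1 := by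
      rw [norm_mul, norm_mul, norm_pow, norm_pow]
      exact mul_le_one₀ (mul_le_one₀ (IsUltrametricDist.norm_natCast_le_one K _)
        (by positivity) (pow_le_one₀ (norm_nonneg t) ht1)) (by positivity)
        (pow_le_one₀ (norm_nonneg v) hv)
    calc _ ≤ 1 * ‖c‖ := by rw [norm_smul]; gcongr
      _ ≤ M := by rwa [one_mul]
  | zero => simp
  | add f g _ _ hf hg => rw [map_add]; exact add_mem hf hg

theorem phiQuot_mem_coeffBoundedPolyFun [IsUltrametricDist K] {M : ℝ} {f : K → E}
    (hf : f ∈ coeffBoundedPolyFun M) :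
    ∀ (q : ℕ) (v t : Fin q → K), (∀ i, ‖v i‖ ≤ 1) → (∀ i, t i ≠ 0) → (∀ i, ‖t i‖ ≤ 1) →
      (fun x => phiQuot f q x v t) ∈ coeffBoundedPolyFun M
  | 0, _, _, _, _, _ => hf
  | q + 1, _, _, hv, ht, ht1 =>
    diffQuot_mem_coeffBoundedPolyFun (hv _) (ht _) (ht1 _)
      (phiQuot_mem_coeffBoundedPolyFun hf q _ _ (fun _ => hv _) (fun _ => ht _) fun _ => ht1 _)

end CoeffBounded

theorem pi_closedBall_subset_closure_pi_ne_zero {K : Type*} [NontriviallyNormedField K]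
    [IsUltrametricDist K] (ι : Type*) :
    Set.univ.pi (fun _ : ι => Metric.closedBall (0 : K) 1) ⊆
      closure (Set.univ.pi fun _ => Metric.closedBall (0 : K) 1 ∩ {0}ᶜ) := by
  rw [closure_pi_set]
  refine Set.pi_mono fun _ _ => ?_
  calc Metric.closedBall (0 : K) 1 = Metric.closedBall 0 1 ∩ closure {0}ᶜ := by
        rw [(dense_compl_singleton (0 : K)).closure_eq, Set.inter_univ]
    _ ⊆ _ := (IsUltrametricDist.isOpen_closedBall 0 one_ne_zero).inter_closure

/-- Corollary 13. For the polynomial `u(x) = Σ_{n=0}^m aₙ xⁿ` with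
coefficients in `K^b`, the continuous extension `Φ̄^q u` satisfies
`‖Φ̄^q u(x;v;t)‖ ≤ max_{0≤n≤m} ‖aₙ‖` whenever `‖x‖ ≤ 1`, `‖vᵢ‖ ≤ 1`, `‖tᵢ‖ ≤ 1`. -/
theorem statement8 {K : Type*} [NontriviallyNormedField K]
    (hna : ∀ x y : K, ‖x + y‖ ≤ max ‖x‖ ‖y‖)
    (b m : ℕ) (a : ℕ → Fin b → K)
    (u : K → Fin b → K) (hu : u = fun x => ∑ n ∈ Finset.range (m + 1), x ^ n • a n)
    (q : ℕ)
    (g : K × (Fin q → K) × (Fin q → K) → Fin b → K)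
    (hgc : Continuous g)
    (hge : ∀ (x : K) (v t : Fin q → K), (∀ i, t i ≠ 0) → g (x, v, t) = phiQuot u q x v t) :
    ∀ (x : K) (v t : Fin q → K), ‖x‖ ≤ 1 → (∀ i, ‖v i‖ ≤ 1) → (∀ i, ‖t i‖ ≤ 1) →
      ‖g (x, v, t)‖ ≤ (Finset.range (m + 1)).sup' ⟨0, by simp⟩
        (fun n => ‖a n‖) := by
  intro x v t hx hv ht
  have : IsUltrametricDist K := .isUltrametricDist_of_forall_norm_add_le_max_norm hna
  set M := (Finset.range (m + 1)).sup' ⟨0, by simp⟩ fun n => ‖a n‖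
  have hM : 0 ≤ M :=
    (norm_nonneg _).trans (Finset.le_sup' (fun n => ‖a n‖) (Finset.mem_range.2 m.succ_pos))
  have hu_mem : u ∈ coeffBoundedPolyFun M := by
    rw [hu, ← Finset.sum_fn]
    exact sum_mem fun n hn =>
      AddSubmonoid.subset_closure ⟨n, a n, Finset.le_sup' (fun n => ‖a n‖) hn, rfl⟩
  have hclosed : IsClosed {s | ‖g (x, v, s)‖ ≤ M} := isClosed_le (by fun_prop) continuous_const
  refine hclosed.closure_subset_iff.2 ?_
    (pi_closedBall_subset_closure_pi_ne_zero (Fin q) fun i _ => by simpa using ht i)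
  intro s hs
  simp only [Set.mem_pi, Set.mem_univ, Set.mem_inter_iff, Metric.mem_closedBall, dist_zero_right,
    Set.mem_compl_singleton_iff, true_implies] at hs
  rw [Set.mem_ofPred_eq, hge x v s fun i => (hs i).2]
  exact norm_le_of_mem_coeffBoundedPolyFun hM
    (phiQuot_mem_coeffBoundedPolyFun hu_mem q v s hv (fun i => (hs i).2) fun i => (hs i).1) hx
end

section
/- Let K be a non-archimedean valued field as above, U an open subset of K^m, Y a topological K-vector space, and f ∈ C^n(U,Y). Then Φ̄^n f is symmetric under simultaneous permutation of the pairs (v_j,t_j): for every permutation σ of {1,…,n} and every (x;v_1,…,v_n;t_1,…,t_n) ∈ U^{(n)} one has Φ̄^n f(x; v_{σ(1)},…,v_{σ(n)}; t_{σ(1)},…,t_{σ(n)}) = Φ̄^n f(x; v_1,…,v_n; t_1,…,t_n). -/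
open Filter Topology

/-!
For nonzero `tᵢ`, expanding the recursion gives
`Φⁿ f(x;v;t) = (∏ tᵢ)⁻¹ • ∑_{S ⊆ {1,…,n}} (-1)^{n-|S|} f(x + ∑_{i∈S} tᵢvᵢ)`,
which is visibly invariant under permuting the pairs `(vᵢ,tᵢ)`. For arbitrary `t`, shift every
`tᵢ` by the same small `s ≠ 0`: this commutes with the permutation, makes all parameters nonzero
for all but finitely many `s`, and stays inside the open set `U⁽ⁿ⁾`; continuity of `Φ̄ⁿ f`
then passes the symmetry to the limit `s → 0`.
-/

open Finset

section IteratedDifference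

variable {K X Y : Type*} [Field K] [AddCommGroup X] [Module K X] [AddCommGroup Y]

-- `Δ_{t₁v₁} ⋯ Δ_{tₙvₙ} f (x)` with `Δ_w f (x) = f (x + w) - f x`, expanded over `S = {i | ε i}`.
def iterDiff (f : X → Y) (n : ℕ) (x : X) (v : Fin n → X) (t : Fin n → K) : Y :=
  ∑ ε : Fin n → Bool,
    (∏ i, if ε i then (1 : ℤ) else -1) • f (x + ∑ i, if ε i then t i • v i else 0)

theorem iterDiff_succ (f : X → Y) (n : ℕ) (x : X) (v : Fin (n + 1) → X) (t : Fin (n + 1) → K) :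
    iterDiff f (n + 1) x v t =
      iterDiff f n (x + t (Fin.last n) • v (Fin.last n)) (Fin.init v) (Fin.init t) -
        iterDiff f n x (Fin.init v) (Fin.init t) := by
  rw [iterDiff, ← (Fin.snocEquiv fun _ => Bool).sum_comp (M := Y), Fintype.sum_prod_type_right,
    iterDiff, iterDiff, ← sum_sub_distrib]
  refine sum_congr rfl fun ε _ => ?_
  simp [Fin.prod_univ_castSucc, Fin.sum_univ_castSucc, Fin.init, sub_eq_add_neg, add_assoc,
    add_comm]

theorem iterDiff_comp_perm (f : X → Y) (n : ℕ) (x : X) (v : Fin n → X) (t : Fin n → K)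
    (σ : Equiv.Perm (Fin n)) : iterDiff f n x (v ∘ σ) (t ∘ σ) = iterDiff f n x v t := by
  refine Fintype.sum_equiv (σ.arrowCongr (Equiv.refl Bool)) _ _ fun ε => ?_
  congr 1
  · exact Fintype.prod_equiv σ _ _ fun i => by simp
  · congr 2
    exact Fintype.sum_equiv σ _ _ fun i => by simp

variable [Module K Y]

theorem phiQuot_eq_smul_iterDiff (f : X → Y) (n : ℕ) (x : X) (v : Fin n → X) (t : Fin n → K)
    (ht : ∀ i, t i ≠ 0) : phiQuot f n x v t = (∏ i, t i)⁻¹ • iterDiff f n x v t := by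
  induction n generalizing x with
  | zero => simp [phiQuot, iterDiff]
  | succ n ih =>
    have hinit : ∀ i, Fin.init t i ≠ 0 := fun i => ht _
    dsimp only [phiQuot]
    rw [ih _ _ _ hinit, ih _ _ _ hinit, iterDiff_succ, Fin.prod_univ_castSucc, ← smul_sub,
      smul_smul, mul_inv, mul_comm]
    rfl

theorem phiQuot_comp_perm (f : X → Y) (n : ℕ) (x : X) (v : Fin n → X) (t : Fin n → K)
    (ht : ∀ i, t i ≠ 0) (σ : Equiv.Perm (Fin n)) :
    phiQuot f n x (v ∘ σ) (t ∘ σ) = phiQuot f n x v t := by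
  rw [phiQuot_eq_smul_iterDiff f n x _ (t ∘ σ) fun i => ht (σ i),
    phiQuot_eq_smul_iterDiff f n x v t ht, iterDiff_comp_perm, Function.comp_def, Equiv.prod_comp σ t]

end IteratedDifference

theorem isOpen_phiDom {K X : Type*} [Field K] [TopologicalSpace K] [AddCommGroup X] [Module K X]
    [TopologicalSpace X] [ContinuousAdd X] [ContinuousSMul K X] {U : Set X} (hU : IsOpen U)
    (n : ℕ) : IsOpen (phiDom K U n) := by
  have : phiDom K U n = ⋂ k ∈ Set.Iic n,
      (fun p : X × (Fin n → X) × (Fin n → K) =>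
        p.1 + ∑ i ∈ univ.filter (fun i : Fin n => (i : ℕ) < k), p.2.2 i • p.2.1 i) ⁻¹' U := by
    ext p
    simp [phiDom]
  rw [this]
  exact (Set.finite_Iic n).isOpen_biInter fun k _ => hU.preimage (by fun_prop)

theorem tendsto_add_const_snd_snd {A B K ι : Type*} [TopologicalSpace A] [TopologicalSpace B]
    [TopologicalSpace K] [AddZeroClass K] [ContinuousAdd K] (q : A × B × (ι → K)) :
    Tendsto (fun s : K => (q.1, q.2.1, q.2.2 + fun _ => s)) (𝓝 0) (𝓝 q) := by
  have : Continuous fun s : K => (q.1, q.2.1, q.2.2 + fun _ => s) := by fun_prop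
  exact this.tendsto' 0 q (by simp [← Pi.zero_def])

theorem eventually_add_ne_zero {K ι : Type*} [AddGroup K] [TopologicalSpace K] [T1Space K]
    [Finite ι] (t : ι → K) : ∀ᶠ s in 𝓝[≠] (0 : K), ∀ i, t i + s ≠ 0 :=
  eventually_all.2 fun i => nhdsNE_le_cofinite 0 <|
    (eventually_cofinite_ne (-t i)).mono fun _ hs h => hs (eq_neg_of_add_eq_zero_right h)

theorem statement13_general {K : Type*} [NontriviallyNormedField K]
    {Y : Type*} [AddCommGroup Y] [Module K Y] [TopologicalSpace Y]
    [T2Space Y]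
    (m : ℕ) (U : Set (Fin m → K)) (hU : IsOpen U)
    (n : ℕ) (f : (Fin m → K) → Y)
    (g : (Fin m → K) × (Fin n → Fin m → K) × (Fin n → K) → Y)
    (hgc : ContinuousOn g (phiDom K U n))
    (hge : ∀ p ∈ phiDom K U n, (∀ i, p.2.2 i ≠ 0) → g p = phiQuot f n p.1 p.2.1 p.2.2)
    (σ : Equiv.Perm (Fin n)) (p : (Fin m → K) × (Fin n → Fin m → K) × (Fin n → K))
    (hp : p ∈ phiDom K U n)
    (hpσ : (p.1, p.2.1 ∘ σ, p.2.2 ∘ σ) ∈ phiDom K U n) :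
    g (p.1, p.2.1 ∘ σ, p.2.2 ∘ σ) = g p := by
  have hdom := isOpen_phiDom (K := K) hU n
  have hlim : ∀ q ∈ phiDom K U n,
      Tendsto (fun s : K => g (q.1, q.2.1, q.2.2 + fun _ => s)) (𝓝[≠] 0) (𝓝 (g q)) :=
    fun q hq => ((hgc.continuousAt (hdom.mem_nhds hq)).tendsto.comp
      (tendsto_add_const_snd_snd q)).mono_left nhdsWithin_le_nhds
  have hmem : ∀ q ∈ phiDom K U n,
      ∀ᶠ s in 𝓝[≠] (0 : K), (q.1, q.2.1, q.2.2 + fun _ => s) ∈ phiDom K U n :=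
    fun q hq => nhdsWithin_le_nhds <| (tendsto_add_const_snd_snd q).eventually (hdom.mem_nhds hq)
  have hsymm : ∀ᶠ s in 𝓝[≠] (0 : K),
      g (p.1, p.2.1 ∘ σ, p.2.2 ∘ σ + fun _ => s) = g (p.1, p.2.1, p.2.2 + fun _ => s) := by
    filter_upwards [eventually_add_ne_zero p.2.2, hmem _ hp, hmem _ hpσ] with s hs hps hpσs
    rw [hge _ hpσs fun i => hs (σ i), hge _ hps hs]
    exact phiQuot_comp_perm f n p.1 p.2.1 _ hs σ
  exact tendsto_nhds_unique (hlim _ hpσ) ((hlim _ hp).congr' (hsymm.mono fun _ h => h.symm))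

/-- Lemma 24. Let `U ⊆ K^m` be open, `Y` a topological `K`-vector
space and `f ∈ C^n(U,Y)`. Then any continuous extension `Φ̄^n f` of `Φ^n f` is
symmetric under simultaneous permutation of the pairs `(vⱼ,tⱼ)`. -/
theorem statement13 {K : Type*} [NontriviallyNormedField K] [Infinite K]
    (hna : ∀ x y : K, ‖x + y‖ ≤ max ‖x‖ ‖y‖)
    {Y : Type*} [AddCommGroup Y] [Module K Y] [TopologicalSpace Y]
    [IsTopologicalAddGroup Y] [ContinuousSMul K Y] [T2Space Y]
    (m : ℕ) (hm : 1 ≤ m) (U : Set (Fin m → K)) (hU : IsOpen U)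
    (n : ℕ) (f : (Fin m → K) → Y) (hf : IsCn K U f n)
    (g : (Fin m → K) × (Fin n → Fin m → K) × (Fin n → K) → Y)
    (hgc : ContinuousOn g (phiDom K U n))
    (hge : ∀ p ∈ phiDom K U n, (∀ i, p.2.2 i ≠ 0) → g p = phiQuot f n p.1 p.2.1 p.2.2)
    (σ : Equiv.Perm (Fin n)) (p : (Fin m → K) × (Fin n → Fin m → K) × (Fin n → K))
    (hp : p ∈ phiDom K U n)
    (hpσ : (p.1, p.2.1 ∘ σ, p.2.2 ∘ σ) ∈ phiDom K U n) :
    g (p.1, p.2.1 ∘ σ, p.2.2 ∘ σ) = g p :=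
  statement13_general m U hU n f g hgc hge σ p hp hpσ
end

section
/- Let K be a non-archimedean valued field as above, U an open subset of K^m, Y a topological K-vector space, f ∈ C^{n−1}(U,Y), and δ > 0. Then the restriction of Φ^n f to the set {(x;v_1,…,v_n;t_1,…,t_n) ∈ U^{(n)} : |t_i| ≥ δ for at least one i} is continuous. -/
open Filter Topology

theorem ContinuousOn.inv_smul_sub_comp {α β 𝕜 Y : Type*} [TopologicalSpace α]
    [TopologicalSpace β] [DivisionRing 𝕜] [TopologicalSpace 𝕜] [ContinuousInv₀ 𝕜]
    [AddCommGroup Y] [Module 𝕜 Y] [TopologicalSpace Y] [IsTopologicalAddGroup Y]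
    [ContinuousSMul 𝕜 Y] {G : β → Y} {s : Set β} (hG : ContinuousOn G s)
    {a b : α → β} (ha : Continuous a) (hb : Continuous b) {c : α → 𝕜} (hc : Continuous c) :
    ContinuousOn (fun p => (c p)⁻¹ • (G (a p) - G (b p))) {p | c p ≠ 0 ∧ a p ∈ s ∧ b p ∈ s} :=
  have hinv : ContinuousOn (fun p => (c p)⁻¹) {p | c p ≠ 0 ∧ a p ∈ s ∧ b p ∈ s} :=
    fun _ hp => (hc.continuousAt.inv₀ hp.1).continuousWithinAt
  hinv.smul <| (hG.comp ha.continuousOn fun _ hp => hp.2.1).sub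
    (hG.comp hb.continuousOn fun _ hp => hp.2.2)

theorem statement15_general {K : Type*} [NontriviallyNormedField K]
    {Y : Type*} [AddCommGroup Y] [Module K Y] [TopologicalSpace Y]
    [IsTopologicalAddGroup Y] [ContinuousSMul K Y]
    (m : ℕ) (U : Set (Fin m → K))
    (n : ℕ) (δ : ℝ) (hδ : 0 < δ)
    (G : (Fin m → K) × (Fin n → Fin m → K) × (Fin n → K) → Y)
    (hGc : ContinuousOn G (phiDom K U n))
    (i : Fin (n + 1)) :
    ContinuousOn
      (fun p : (Fin m → K) × (Fin (n + 1) → Fin m → K) × (Fin (n + 1) → K) =>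
        (p.2.2 i)⁻¹ •
          (G (p.1 + p.2.2 i • p.2.1 i, fun j => p.2.1 (i.succAbove j),
              fun j => p.2.2 (i.succAbove j)) -
           G (p.1, fun j => p.2.1 (i.succAbove j), fun j => p.2.2 (i.succAbove j))))
      {p : (Fin m → K) × (Fin (n + 1) → Fin m → K) × (Fin (n + 1) → K) |
        p ∈ phiDom K U (n + 1) ∧ δ ≤ ‖p.2.2 i‖ ∧
        (p.1, (fun j => p.2.1 (i.succAbove j)), fun j => p.2.2 (i.succAbove j))
          ∈ phiDom K U n ∧
        (p.1 + p.2.2 i • p.2.1 i, (fun j => p.2.1 (i.succAbove j)),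
          fun j => p.2.2 (i.succAbove j)) ∈ phiDom K U n} := by
  refine (hGc.inv_smul_sub_comp (by fun_prop) (by fun_prop) (by fun_prop)).mono ?_
  rintro p ⟨-, hδi, hx, hxt⟩
  exact ⟨norm_pos_iff.mp (hδ.trans_le hδi), hxt, hx⟩

/-- Lemma 26. Let `U ⊆ K^m` be open, `Y` a topological `K`-vector
space, `f ∈ C^{n}(U,Y)` with continuous extension `G = Φ̄^{n} f`, and `δ > 0`. Then the
iterated quotient `Φ^{n+1} f`, built from `G` by taking the difference quotient in the
`i`-th pair of variables, is continuous on the part of `U^{(n+1)}` where `‖tᵢ‖ ≥ δ`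
(and where both tuples fed to `G` lie in `U^{(n)}`). -/
theorem statement15 {K : Type*} [NontriviallyNormedField K] [Infinite K]
    (hna : ∀ x y : K, ‖x + y‖ ≤ max ‖x‖ ‖y‖)
    {Y : Type*} [AddCommGroup Y] [Module K Y] [TopologicalSpace Y]
    [IsTopologicalAddGroup Y] [ContinuousSMul K Y]
    (m : ℕ) (hm : 1 ≤ m) (U : Set (Fin m → K)) (hU : IsOpen U)
    (n : ℕ) (f : (Fin m → K) → Y) (hf : IsCn K U f n) (δ : ℝ) (hδ : 0 < δ)
    (G : (Fin m → K) × (Fin n → Fin m → K) × (Fin n → K) → Y)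
    (hGc : ContinuousOn G (phiDom K U n))
    (hGe : ∀ p ∈ phiDom K U n, (∀ i, p.2.2 i ≠ 0) → G p = phiQuot f n p.1 p.2.1 p.2.2)
    (i : Fin (n + 1)) :
    ContinuousOn
      (fun p : (Fin m → K) × (Fin (n + 1) → Fin m → K) × (Fin (n + 1) → K) =>
        (p.2.2 i)⁻¹ •
          (G (p.1 + p.2.2 i • p.2.1 i, fun j => p.2.1 (i.succAbove j),
              fun j => p.2.2 (i.succAbove j)) -
           G (p.1, fun j => p.2.1 (i.succAbove j), fun j => p.2.2 (i.succAbove j))))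
      {p : (Fin m → K) × (Fin (n + 1) → Fin m → K) × (Fin (n + 1) → K) |
        p ∈ phiDom K U (n + 1) ∧ δ ≤ ‖p.2.2 i‖ ∧
        (p.1, (fun j => p.2.1 (i.succAbove j)), fun j => p.2.2 (i.succAbove j))
          ∈ phiDom K U n ∧
        (p.1 + p.2.2 i • p.2.1 i, (fun j => p.2.1 (i.succAbove j)),
          fun j => p.2.2 (i.succAbove j)) ∈ phiDom K U n} :=
  statement15_general m U n δ hδ G hGc i
end
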